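/- Let (Z,ζ,z) be a pointed metric space, X, Y separable subsets of Z, and 0 < ε < 1/2 with H_z(X,Y) < ε. Then there exists a Borel map f : X ∩ B(z,1/ε) → Y with ζ(f(x),x) ≤ ε for all x ∈ X ∩ B(z,1/ε), and Y ∩ B(z, 1/ε − ε) ⊆ B(f(X ∩ B(z,1/ε)), 2ε). -/
import Mathlib


open Metric

noncomputable def HzGen {α : Type*} (ζ : α → α → ℝ) (z : α) (A B : Set α) : ℝ :=
  sInf ({1/2} ∪ {ε : ℝ | 0 < ε ∧ ε < 1/2 ∧
    (∀ a ∈ A, ζ z a ≤ 1/ε → ∃ b ∈ B, ζ a b ≤ ε) ∧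
    (∀ b ∈ B, ζ z b ≤ 1/ε → ∃ a ∈ A, ζ b a ≤ ε)})

theorem stmt_9 {Z : Type*} [MetricSpace Z] [MeasurableSpace Z] [BorelSpace Z]
    (z : Z) (X Y : Set Z)
    (hX : TopologicalSpace.IsSeparable X) (hY : TopologicalSpace.IsSeparable Y)
    (ε : ℝ) (hε0 : 0 < ε) (hε : ε < 1/2) (h : HzGen dist z X Y < ε) :
    ∃ f : Z → Z, Measurable f ∧
      (∀ w ∈ X ∩ closedBall z (1/ε), f w ∈ Y ∧ dist (f w) w ≤ ε) ∧
      ∀ y' ∈ Y ∩ closedBall z (1/ε - ε),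
        ∃ w ∈ X ∩ closedBall z (1/ε), dist y' (f w) ≤ 2*ε := by
  classical
  -- extract δ
  unfold HzGen at h
  obtain ⟨δ, hδmem, hδε⟩ := exists_lt_of_csInf_lt (by exact ⟨1/2, Set.mem_union_left _ rfl⟩) h
  rcases hδmem with hδhalf | ⟨hδ0, hδhalf, hXY, hYX⟩
  · exfalso; rw [Set.mem_singleton_iff] at hδhalf; linarith
  have hδε' : δ ≤ ε := hδε.le
  have hinv : (1:ℝ)/ε ≤ 1/δ := by
    apply one_div_le_one_div_of_le hδ0 hδε'
  set S : Set Z := X ∩ closedBall z (1/ε) with hS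
  -- every point of S has a Y-point within δ
  have key : ∀ w ∈ S, ∃ b ∈ Y, dist w b ≤ δ := by
    intro w hw
    exact hXY w hw.1 (le_trans (mem_closedBall'.1 hw.2) hinv)
  rcases Set.eq_empty_or_nonempty S with hSe | hSne
  · refine ⟨id, measurable_id, ?_, ?_⟩
    · intro w hw; rw [hSe] at hw; exact absurd hw (Set.notMem_empty w)
    · intro y' hy'
      exfalso
      have hzy' : dist z y' ≤ 1/δ := by
        have := mem_closedBall'.1 hy'.2
        have : dist z y' ≤ 1/ε := by linarith
        linarith
      obtain ⟨a, haX, hya⟩ := hYX y' hy'.1 hzy'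
      have haS : a ∈ S := by
        constructor
        · exact haX
        · rw [mem_closedBall']
          calc dist z a ≤ dist z y' + dist y' a := dist_triangle _ _ _
          _ ≤ (1/ε - ε) + δ := add_le_add (mem_closedBall'.1 hy'.2) hya
          _ ≤ 1/ε := by linarith
      rw [hSe] at haS; exact haS
  -- countable dense subset of S
  have hSsep : TopologicalSpace.IsSeparable S := hX.mono Set.inter_subset_left
  obtain ⟨t, htS, htc, hdense⟩ := hSsep.exists_countable_dense_subset
  have htne : t.Nonempty := by
    by_contra hne
    rw [Set.not_nonempty_iff_eq_empty] at hne
    rw [hne, closure_empty] at hdense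
    exact hSne.ne_empty (Set.subset_empty_iff.1 hdense)
  obtain ⟨u, hu⟩ := Set.Countable.exists_eq_range htc htne
  have huS : ∀ n, u n ∈ S := by
    intro n
    apply htS; rw [hu]; exact Set.mem_range_self n
  -- choose y n ∈ Y near u n
  have hyex : ∀ n, ∃ b ∈ Y, dist (u n) b ≤ δ := fun n => key _ (huS n)
  choose y hyY hyd using hyex
  have hεδ : 0 < ε - δ := by linarith
  -- predicate for Nat.find
  set p : ℕ → Z → Prop := fun n w => dist w (u n) < ε - δ ∨ ∀ m, ¬ dist w (u m) < ε - δ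
    with hp
  have hptot : ∀ w, ∃ n, p n w := by
    intro w
    by_cases hw : ∃ m, dist w (u m) < ε - δ
    · obtain ⟨m, hm⟩ := hw; exact ⟨m, Or.inl hm⟩
    · exact ⟨0, Or.inr (fun m hm => hw ⟨m, hm⟩)⟩
  set f : Z → Z := fun w => y (Nat.find (hptot w)) with hf
  have hfm : Measurable f := by
    apply Measurable.find (f := fun n _ => y n) (p := p)
      (fun n => measurable_const) _ hptot
    intro n
    have : {x | p n x} = (ball (u n) (ε - δ)) ∪ (⋂ m, (ball (u m) (ε - δ))ᶜ) := by
      ext x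
      simp [hp, mem_ball, Set.mem_iInter]
    rw [this]
    exact (measurableSet_ball.union (MeasurableSet.iInter fun m =>
      measurableSet_ball.compl))
  have hfS : ∀ w ∈ S, f w ∈ Y ∧ dist (f w) w ≤ ε := by
    intro w hw
    have hwc : w ∈ closure t := hdense hw
    obtain ⟨b, hbt, hbd⟩ := Metric.mem_closure_iff.1 hwc (ε - δ) hεδ
    rw [hu] at hbt
    obtain ⟨m, rfl⟩ := hbt
    have hex : ∃ k, dist w (u k) < ε - δ := ⟨m, hbd⟩
    have hn := Nat.find_spec (hptot w)
    have hdist : dist w (u (Nat.find (hptot w))) < ε - δ := by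
      rcases hn with h1 | h2
      · exact h1
      · exact absurd hbd (h2 m)
    refine ⟨hyY _, ?_⟩
    calc dist (f w) w ≤ dist (f w) (u (Nat.find (hptot w))) + dist (u (Nat.find (hptot w))) w :=
      dist_triangle _ _ _
    _ ≤ δ + (ε - δ) := add_le_add (by rw [dist_comm]; exact hyd _) (by rw [dist_comm]; exact hdist.le)
    _ = ε := by ring
  refine ⟨f, hfm, hfS, ?_⟩
  intro y' hy'
  have hzy' : dist z y' ≤ 1/δ := by
    have h1 := mem_closedBall'.1 hy'.2
    have : dist z y' ≤ 1/ε := by linarith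
    linarith
  obtain ⟨a, haX, hya⟩ := hYX y' hy'.1 hzy'
  have haS : a ∈ S := by
    constructor
    · exact haX
    · rw [mem_closedBall']
      calc dist z a ≤ dist z y' + dist y' a := dist_triangle _ _ _
      _ ≤ (1/ε - ε) + δ := add_le_add (mem_closedBall'.1 hy'.2) hya
      _ ≤ 1/ε := by linarith
  refine ⟨a, haS, ?_⟩
  calc dist y' (f a) ≤ dist y' a + dist a (f a) := dist_triangle _ _ _
  _ ≤ δ + ε := add_le_add hya (by rw [dist_comm]; exact (hfS a haS).2)
  _ ≤ 2 * ε := by linarith
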